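/- arXiv:0903.3892 — 2 statements merged into one kernel-verified Lean document; each statement's English description precedes it below -/
import Mathlib

section
/- Every superlevel set $A_s = \{x \in A : G^A(x) \ge s\}$ of the killed Green function, for $0 < s \le G^A(o)$, is connected and contains the root $o$. -/
/-!
Write `F z = ∑ₖ pᵏ_A(o, z) = m z · G^A(z)` for the occupation density of the killed walk started
at `o`, and let `U` be the set of points of `{G^A ≥ s}` not joined to `o` inside it. Every edge
entering `U` starts at a point where `G^A < s`. By reversibility `s · m` is excessive for the
killed kernel, so induction on the partial sums of `F` gives `F ≤ s · m` on `U` (a maximum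
principle). An edge entering `U` would make this strict at its endpoint, contradicting `G^A ≥ s`
there; so no edge enters `U`, the walk never visits `U`, and `G^A = 0 < s` on `U`: it is empty.
-/

open scoped Classical BigOperators

noncomputable def kerPow {V : Type*} (q : V → V → ℝ) : ℕ → V → V → ℝ
  | 0 => fun x y => if x = y then 1 else 0
  | n + 1 => fun x y => ∑' z, kerPow q n x z * q z y

open Finset

section MaximumPrinciple

variable {V : Type*} {q : V → V → ℝ} {o : V}

theorem kerPow_nonneg (hq : ∀ x y, 0 ≤ q x y) : ∀ n x y, 0 ≤ kerPow q n x y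
  | 0, x, y => by simp only [kerPow]; split <;> norm_num
  | n + 1, x, y => tsum_nonneg fun z => mul_nonneg (kerPow_nonneg hq n x z) (hq z y)

theorem sum_range_succ_kerPow_le (hq : ∀ x y, 0 ≤ q x y) {z : V} (hz : z ≠ o) {g : V → ℝ}
    (hg : Summable fun w => g w * q w z) {n : ℕ}
    (hbound : ∀ w, q w z ≠ 0 → ∑ k ∈ range n, kerPow q k o w ≤ g w) :
    ∑ k ∈ range (n + 1), kerPow q k o z ≤ ∑' w, g w * q w z := by
  have hdom : ∀ k ∈ range n, ∀ w, kerPow q k o w * q w z ≤ g w * q w z := by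
    intro k hk w
    by_cases hqwz : q w z = 0
    · simp [hqwz]
    · refine mul_le_mul_of_nonneg_right ?_ (hq w z)
      exact (single_le_sum (fun j _ => kerPow_nonneg hq j o w) hk).trans (hbound w hqwz)
  have hsummable : ∀ k ∈ range n, Summable fun w => kerPow q k o w * q w z := fun k hk =>
    hg.of_nonneg_of_le (fun w => mul_nonneg (kerPow_nonneg hq k o w) (hq w z)) (hdom k hk)
  calc ∑ k ∈ range (n + 1), kerPow q k o z
      = ∑ k ∈ range n, ∑' w, kerPow q k o w * q w z := by
        rw [sum_range_succ']
        simp [kerPow, Ne.symm hz]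
    _ = ∑' w, (∑ k ∈ range n, kerPow q k o w) * q w z := by
        simp only [sum_mul]
        exact (Summable.tsum_finsetSum hsummable).symm
    _ ≤ ∑' w, g w * q w z := by
        refine Summable.tsum_le_tsum (fun w => ?_) ?_ hg
        · by_cases hqwz : q w z = 0
          · simp [hqwz]
          · exact mul_le_mul_of_nonneg_right (hbound w hqwz) (hq w z)
        · simp only [sum_mul]
          exact summable_sum hsummable

theorem tsum_kerPow_le_tsum_mul (hq : ∀ x y, 0 ≤ q x y) {z : V} (hz : z ≠ o) {g : V → ℝ}
    (hg : Summable fun w => g w * q w z)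
    (hbound : ∀ w, q w z ≠ 0 → ∀ n, ∑ k ∈ range n, kerPow q k o w ≤ g w) :
    ∑' k, kerPow q k o z ≤ ∑' w, g w * q w z := by
  refine Real.tsum_le_of_sum_range_le (fun k => kerPow_nonneg hq k o z) fun n => ?_
  calc ∑ k ∈ range n, kerPow q k o z
      ≤ ∑ k ∈ range (n + 1), kerPow q k o z :=
        sum_le_sum_of_subset_of_nonneg (range_subset_range.mpr n.le_succ)
          fun k _ _ => kerPow_nonneg hq k o z
    _ ≤ ∑' w, g w * q w z :=
        sum_range_succ_kerPow_le hq hz hg fun w hqwz => hbound w hqwz n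

theorem sum_range_kerPow_le_of_excessive (hq : ∀ x y, 0 ≤ q x y) {U : Set V} (hoU : o ∉ U)
    {g : V → ℝ} (hg0 : ∀ z ∈ U, 0 ≤ g z) (hgsum : ∀ z ∈ U, Summable fun w => g w * q w z)
    (hgexc : ∀ z ∈ U, ∑' w, g w * q w z ≤ g z)
    (hbdry : ∀ z ∈ U, ∀ w ∉ U, q w z ≠ 0 → ∀ n, ∑ k ∈ range n, kerPow q k o w ≤ g w) :
    ∀ n, ∀ z ∈ U, ∑ k ∈ range n, kerPow q k o z ≤ g z := by
  intro n
  induction n with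
  | zero => simpa using hg0
  | succ n ih =>
    intro z hz
    have hzo : z ≠ o := fun h => hoU (h ▸ hz)
    refine (sum_range_succ_kerPow_le hq hzo (hgsum z hz) fun w hqwz => ?_).trans (hgexc z hz)
    by_cases hw : w ∈ U
    · exact ih w hw
    · exact hbdry z hz w hw hqwz n

theorem tsum_kerPow_eq_zero_of_no_edge_into (hq : ∀ x y, 0 ≤ q x y) {U : Set V} (hoU : o ∉ U)
    (hclosed : ∀ z ∈ U, ∀ w ∉ U, q w z = 0) {z : V} (hz : z ∈ U) :
    ∑' k, kerPow q k o z = 0 := by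
  have hpartial := sum_range_kerPow_le_of_excessive hq hoU (g := 0) (fun _ _ => le_rfl)
    (fun _ _ => by simp) (fun _ _ => by simp)
    (fun z hz w hw hqwz => absurd (hclosed z hz w hw) hqwz)
  exact le_antisymm (Real.tsum_le_of_sum_range_le (fun k => kerPow_nonneg hq k o z)
    fun n => hpartial n z hz) (tsum_nonneg fun k => kerPow_nonneg hq k o z)

theorem tsum_kerPow_lt_tsum_mul (hq : ∀ x y, 0 ≤ q x y)
    (hsum : ∀ w, Summable fun k => kerPow q k o w) {z : V} (hz : z ≠ o) {h : V → ℝ}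
    (hh0 : ∀ w, 0 ≤ h w) (hhsum : Summable fun w => h w * q w z)
    (hbound : ∀ w, q w z ≠ 0 → ∀ n, ∑ k ∈ range n, kerPow q k o w ≤ h w)
    {w : V} (hqwz : q w z ≠ 0) (hlt : ∑' k, kerPow q k o w < h w) :
    ∑' k, kerPow q k o z < ∑' w, h w * q w z := by
  -- compare with `min h F`, which still dominates the partial sums but is strictly below `h` at `w`
  set g : V → ℝ := fun w => min (h w) (∑' k, kerPow q k o w)
  have hg_le : ∀ w, g w * q w z ≤ h w * q w z := fun w =>
    mul_le_mul_of_nonneg_right (min_le_left _ _) (hq w z)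
  have hg_lt : g w * q w z < h w * q w z :=
    mul_lt_mul_of_pos_right ((min_le_right _ _).trans_lt hlt)
      (lt_of_le_of_ne (hq w z) (Ne.symm hqwz))
  have hgsum : Summable fun w => g w * q w z := hhsum.of_nonneg_of_le
    (fun w => mul_nonneg (le_min (hh0 w) (tsum_nonneg fun k => kerPow_nonneg hq k o w))
      (hq w z)) hg_le
  calc ∑' k, kerPow q k o z ≤ ∑' w, g w * q w z :=
        tsum_kerPow_le_tsum_mul hq hz hgsum fun w' hqw'z n =>
          le_min (hbound w' hqw'z n) ((hsum w').sum_le_tsum _ fun k _ => kerPow_nonneg hq k o w')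
    _ < ∑' w, h w * q w z := Summable.tsum_lt_tsum hg_le hg_lt hgsum hhsum

theorem eq_empty_of_excessive_le_tsum_kerPow (hq : ∀ x y, 0 ≤ q x y)
    (hsum : ∀ z, Summable fun k => kerPow q k o z) {h : V → ℝ} (hpos : ∀ z, 0 < h z)
    (hhsum : ∀ z, Summable fun w => h w * q w z) (hexc : ∀ z, ∑' w, h w * q w z ≤ h z)
    {U : Set V} (hoU : o ∉ U) (hU : ∀ z ∈ U, h z ≤ ∑' k, kerPow q k o z)
    (hbdry : ∀ z ∈ U, ∀ w ∉ U, q w z ≠ 0 → ∑' k, kerPow q k o w < h w) :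
    U = ∅ := by
  have hbdry_partial : ∀ z ∈ U, ∀ w ∉ U, q w z ≠ 0 → ∀ n, ∑ k ∈ range n, kerPow q k o w ≤ h w :=
    fun z hz w hw hqwz n => ((hsum w).sum_le_tsum _ fun k _ => kerPow_nonneg hq k o w).trans
      (hbdry z hz w hw hqwz).le
  have hle_h := sum_range_kerPow_le_of_excessive hq hoU (fun z _ => (hpos z).le)
    (fun z _ => hhsum z) (fun z _ => hexc z) hbdry_partial
  have hclosed : ∀ z ∈ U, ∀ w ∉ U, q w z = 0 := by
    intro z hz w hw
    by_contra hqwz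
    have := tsum_kerPow_lt_tsum_mul hq hsum (fun h => hoU (h ▸ hz)) (fun w => (hpos w).le)
      (hhsum z) (fun w' hqw'z n => if hw' : w' ∈ U then hle_h n w' hw'
        else hbdry_partial z hz w' hw' hqw'z n) hqwz (hbdry z hz w hw hqwz)
    linarith [hU z hz, hexc z]
  refine Set.eq_empty_iff_forall_notMem.mpr fun z hz => ?_
  linarith [hU z hz, hpos z, tsum_kerPow_eq_zero_of_no_edge_into hq hoU hclosed hz]

end MaximumPrinciple

section Reversible

variable {V : Type*} {p : V → V → ℝ} {m : V → ℝ}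

theorem hasSum_mul_of_reversible (hstoch : ∀ x, ∑' y, p x y = 1)
    (hrev : ∀ x y, m x * p x y = m y * p y x) (z : V) :
    HasSum (fun w => m w * p w z) (m z) := by
  have hsummable : Summable (p z) := by
    by_contra hns
    simpa [tsum_eq_zero_of_not_summable hns] using hstoch z
  have hsum := (hsummable.mul_left (m z)).hasSum
  rw [tsum_mul_left, hstoch z, mul_one] at hsum
  simpa only [hrev _ z] using hsum

theorem summable_mul_and_tsum_mul_le_of_reversible {q : V → V → ℝ}
    (hstoch : ∀ x, ∑' y, p x y = 1) (hrev : ∀ x y, m x * p x y = m y * p y x)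
    (hm : ∀ x, 0 ≤ m x) (hq : ∀ x y, 0 ≤ q x y) (hqp : ∀ x y, q x y ≤ p x y) (z : V) :
    Summable (fun w => m w * q w z) ∧ ∑' w, m w * q w z ≤ m z := by
  have hinv := hasSum_mul_of_reversible hstoch hrev z
  have hle : ∀ w, m w * q w z ≤ m w * p w z := fun w => mul_le_mul_of_nonneg_left (hqp w z) (hm w)
  have hsummable := hinv.summable.of_nonneg_of_le (fun w => mul_nonneg (hm w) (hq w z)) hle
  exact ⟨hsummable, hinv.tsum_eq ▸ hsummable.tsum_le_tsum hle hinv.summable⟩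

end Reversible

theorem statement3_general {V : Type*}
    (p : V → V → ℝ) (m : V → ℝ)
    (hp : ∀ x y, 0 ≤ p x y) (hstoch : ∀ x, ∑' y, p x y = 1)
    (hm : ∀ x, 0 < m x) (hrev : ∀ x y, m x * p x y = m y * p y x)
    (A : Set V) (o : V) (ho : o ∈ A)
    (pA : V → V → ℝ) (hpA : ∀ x y, pA x y = if x ∈ A then p x y else 0)
    (GA : V → ℝ)
    (hGA : ∀ x, GA x = if x ∈ A then (∑' k : ℕ, kerPow pA k o x) / m x else 0)
    (hGfin : ∀ x, Summable fun k : ℕ => kerPow pA k o x)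
    (s : ℝ) (hs : 0 < s) (hso : s ≤ GA o) :
    (o ∈ A ∧ s ≤ GA o) ∧
      ∀ x, x ∈ A → s ≤ GA x →
        Relation.ReflTransGen
          (fun a b => (a ∈ A ∧ s ≤ GA a) ∧ (b ∈ A ∧ s ≤ GA b) ∧ 0 < p a b) o x := by
  set R := Relation.ReflTransGen
    (fun a b => (a ∈ A ∧ s ≤ GA a) ∧ (b ∈ A ∧ s ≤ GA b) ∧ 0 < p a b) o
  refine ⟨⟨ho, hso⟩, fun x _ hxs => ?_⟩
  have hmemA : ∀ w, s ≤ GA w → w ∈ A := fun w hw => by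
    by_contra hwA
    rw [hGA, if_neg hwA] at hw
    linarith
  have hF : ∀ w ∈ A, ∑' k, kerPow pA k o w = m w * GA w := fun w hw => by
    rw [hGA, if_pos hw, mul_div_cancel₀ _ (hm w).ne']
  have hpA_nonneg : ∀ x y, 0 ≤ pA x y := fun x y => by
    rw [hpA]; split_ifs <;> simp [hp]
  have hpA_le : ∀ x y, pA x y ≤ p x y := fun x y => by
    rw [hpA]; split_ifs <;> simp [hp]
  have hexc := summable_mul_and_tsum_mul_le_of_reversible (m := fun x => s * m x) hstoch
    (fun x y => by rw [mul_assoc, hrev, ← mul_assoc]) (fun x => (mul_pos hs (hm x)).le)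
    hpA_nonneg hpA_le
  let U : Set V := {z | s ≤ GA z ∧ ¬ R z}
  have hU : U = ∅ := by
    refine eq_empty_of_excessive_le_tsum_kerPow hpA_nonneg hGfin (fun z => mul_pos hs (hm z))
      (fun z => (hexc z).1) (fun z => (hexc z).2) (fun hoU => hoU.2 .refl) ?_ ?_
    · intro z ⟨hzs, _⟩
      rw [hF z (hmemA z hzs), mul_comm]
      exact mul_le_mul_of_nonneg_left hzs (hm z).le
    · intro z ⟨hzs, hzR⟩ w hwU hpAwz
      have hwA : w ∈ A := by_contra fun hwA => hpAwz (by rw [hpA, if_neg hwA])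
      have hpwz : 0 < p w z := lt_of_le_of_ne (hp w z) (by rwa [hpA, if_pos hwA, ne_comm] at hpAwz)
      have hws : GA w < s := lt_of_not_ge fun hws =>
        hzR ((of_not_not (not_and.mp hwU hws)).tail ⟨⟨hwA, hws⟩, ⟨hmemA z hzs, hzs⟩, hpwz⟩)
      rw [hF w hwA, mul_comm s]
      exact mul_lt_mul_of_pos_left hws (hm w)
  by_contra hxR
  exact Set.eq_empty_iff_forall_notMem.mp hU x ⟨hxs, hxR⟩

/-- Every superlevel set `A_s = {x ∈ A : G^A(x) ≥ s}` of the killed Green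
function, for `0 < s ≤ G^A(o)`, is connected (by edges of positive transition
probability within `A_s`) and contains the root `o`. -/
theorem statement3 {V : Type*} [Countable V]
    (p : V → V → ℝ) (m : V → ℝ)
    (hp : ∀ x y, 0 ≤ p x y) (hstoch : ∀ x, ∑' y, p x y = 1)
    (hm : ∀ x, 0 < m x) (hrev : ∀ x y, m x * p x y = m y * p y x)
    (A : Set V) (o : V) (ho : o ∈ A)
    (hAconn : ∀ x ∈ A, Relation.ReflTransGen
      (fun a b => a ∈ A ∧ b ∈ A ∧ 0 < p a b) o x)
    (pA : V → V → ℝ) (hpA : ∀ x y, pA x y = if x ∈ A then p x y else 0)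
    (GA : V → ℝ)
    (hGA : ∀ x, GA x = if x ∈ A then (∑' k : ℕ, kerPow pA k o x) / m x else 0)
    (hGfin : ∀ x, Summable fun k : ℕ => kerPow pA k o x)
    (s : ℝ) (hs : 0 < s) (hso : s ≤ GA o) :
    (o ∈ A ∧ s ≤ GA o) ∧
      ∀ x, x ∈ A → s ≤ GA x →
        Relation.ReflTransGen
          (fun a b => (a ∈ A ∧ s ≤ GA a) ∧ (b ∈ A ∧ s ≤ GA b) ∧ 0 < p a b) o x :=
  statement3_general p m hp hstoch hm hrev A o ho pA hpA GA hGA hGfin s hs hso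
end

section
/- Suppose a nonincreasing function $u : [0,\infty) \to [0,\infty)$ satisfies $u(0) \le m(A)$ and $u'(s) \le -(C\,\mathcal{F}(u(s)))^2$ whenever $u(s) > 0$, where $\mathcal{F}$ is positive nondecreasing with $\int_1^\infty \mathcal{F}(s)^{-2}\,ds < \infty$. Then there exists $t_0$, depending only on $C$ and $\mathcal{F}$ (not on $A$ or $u(0)$), such that $u(t) < 1$ for all $t \ge t_0$. -/
/-!
While `u` lies in the dyadic band `[2^j, 2^(j+1)]` it decreases at speed at least
`φ(2^j) = (C F(2^j))²`, so it leaves the band within time `2^j / φ(2^j)`. Hence `u` falls from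
any height to below `1` within time `∑ 2^j / φ(2^j)`, and a continuous Cauchy condensation for
the antitone function `1/φ` bounds this sum by `1/φ(1) + 2 ∫_1^∞ 1/φ`, whatever the initial
height. Working band by band, instead of integrating `u' / φ(u)`, needs no regularity of `F`
beyond monotonicity.
-/

open MeasureTheory Set

theorem image_sub_le_mul_sub_of_hasDerivWithinAt_Iic_le {f f' : ℝ → ℝ} {a b B : ℝ}
    (hab : a ≤ b) (hf : ContinuousOn f (Icc a b))
    (hf' : ∀ x ∈ Ioc a b, HasDerivWithinAt f (f' x) (Iic x) x)
    (bound : ∀ x ∈ Ioc a b, f' x ≤ B) :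
    f b - f a ≤ B * (b - a) := by
  -- Reflect `x ↦ -x` to turn left derivatives into right ones.
  have hg : ContinuousOn (fun x => -f (-x)) (Icc (-b) (-a)) :=
    (hf.comp continuous_neg.continuousOn fun x hx =>
      ⟨le_neg_of_le_neg hx.2, neg_le.1 hx.1⟩).neg
  have hg' : ∀ x ∈ Ico (-b) (-a), HasDerivWithinAt (fun x => -f (-x)) (f' (-x)) (Ici x) x := by
    intro x hx
    have hx' : -x ∈ Ioc a b := ⟨lt_neg_of_lt_neg hx.2, neg_le.1 hx.1⟩
    exact (((hf' (-x) hx').comp x (hasDerivWithinAt_neg x (Ici x))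
      fun y hy => neg_le_neg (mem_Ici.1 hy)).neg).congr_deriv (by ring)
  have key := image_le_of_deriv_right_le_deriv_boundary (B := fun x => -f b + B * (x + b))
    (B' := fun _ => B) hg hg' (by simp) (by fun_prop)
    (fun x _ => by simpa using ((hasDerivWithinAt_id x _).add_const b).const_mul B)
    (fun x hx => bound (-x) ⟨lt_neg_of_lt_neg hx.2, neg_le.1 hx.1⟩)
    (right_mem_Icc.2 (neg_le_neg hab))
  simp only [neg_neg] at key
  linarith

theorem mul_sub_le_sub_of_le_apply {φ u D : ℝ → ℝ} (hφ : MonotoneOn φ (Ioi 0))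
    (hu : AntitoneOn u (Ici 0)) (hcont : ContinuousOn u (Ici 0))
    (hderiv : ∀ s, 0 < s → 0 < u s → HasDerivWithinAt u (D s) (Iic s) s)
    (hD : ∀ s, 0 < s → 0 < u s → D s ≤ -φ (u s))
    {a s t : ℝ} (ha : 0 < a) (hs : 0 ≤ s) (hst : s ≤ t) (hat : a ≤ u t) :
    φ a * (t - s) ≤ u s - u t := by
  have hau : ∀ x ∈ Ioc s t, a ≤ u x := fun x hx =>
    hat.trans (hu (hs.trans hx.1.le) (hs.trans hst) hx.2)
  have hpos : ∀ x ∈ Ioc s t, 0 < x ∧ 0 < u x := fun x hx =>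
    ⟨hs.trans_lt hx.1, ha.trans_le (hau x hx)⟩
  have := image_sub_le_mul_sub_of_hasDerivWithinAt_Iic_le (f' := D) (B := -φ a) hst
    (hcont.mono fun x hx => hs.trans hx.1)
    (fun x hx => hderiv x (hpos x hx).1 (hpos x hx).2)
    (fun x hx => (hD x (hpos x hx).1 (hpos x hx).2).trans
      (neg_le_neg (hφ ha (hpos x hx).2 (hau x hx))))
  linarith

theorem sub_le_sum_two_pow_div_of_le_two_pow {φ u D : ℝ → ℝ}
    (hφpos : ∀ x, 0 < x → 0 < φ x) (hφ : MonotoneOn φ (Ioi 0))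
    (hu : AntitoneOn u (Ici 0)) (hcont : ContinuousOn u (Ici 0))
    (hderiv : ∀ s, 0 < s → 0 < u s → HasDerivWithinAt u (D s) (Iic s) s)
    (hD : ∀ s, 0 < s → 0 < u s → D s ≤ -φ (u s)) {t : ℝ} (ht : 1 ≤ u t) (k : ℕ) :
    ∀ s, 0 ≤ s → s ≤ t → u s ≤ 2 ^ k →
      t - s ≤ ∑ j ∈ Finset.range k, 2 ^ j / φ (2 ^ j) := by
  have hterm : ∀ j : ℕ, 0 ≤ (2 : ℝ) ^ j / φ (2 ^ j) := fun j =>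
    (div_pos (by positivity) (hφpos _ (by positivity))).le
  induction k with
  | zero =>
    intro s hs hst hus
    have hdrop := mul_sub_le_sub_of_le_apply hφ hu hcont hderiv hD one_pos hs hst ht
    rw [Finset.sum_range_zero]
    exact nonpos_of_mul_nonpos_right (by linarith) (hφpos 1 one_pos)
  | succ k ih =>
    intro s hs hst hus
    rw [Finset.sum_range_succ]
    by_cases hus' : u s ≤ 2 ^ k
    · linarith [ih s hs hst hus', hterm k]
    -- Split `[s, t]` at a time `r` where `u` has come down to `2 ^ k`.
    obtain ⟨r, ⟨hsr, hrt⟩, hur, htr⟩ : ∃ r ∈ Icc s t, 2 ^ k ≤ u r ∧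
        t - r ≤ ∑ j ∈ Finset.range k, 2 ^ j / φ (2 ^ j) := by
      by_cases hut : 2 ^ k ≤ u t
      · exact ⟨t, right_mem_Icc.2 hst, hut,
          by simpa using Finset.sum_nonneg fun j _ => hterm j⟩
      · obtain ⟨r, hr, hur⟩ := intermediate_value_Icc' hst
          (hcont.mono fun x hx => hs.trans hx.1) ⟨(not_le.1 hut).le, (not_le.1 hus').le⟩
        exact ⟨r, hr, hur.ge, ih r (hs.trans hr.1) hr.2 hur.le⟩
    have hφk := hφpos (2 ^ k) (by positivity)
    have hdrop := mul_sub_le_sub_of_le_apply hφ hu hcont hderiv hD (by positivity) hs hsr hur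
    have hrs : r - s ≤ 2 ^ k / φ (2 ^ k) := by
      rw [le_div_iff₀ hφk, mul_comm]
      rw [pow_succ] at hus
      linarith
    linarith

theorem AntitoneOn.sum_two_pow_mul_le_integral_Ioi {g : ℝ → ℝ} (hg : AntitoneOn g (Ici 1))
    (hg0 : ∀ x ∈ Ioi 1, 0 ≤ g x) (hint : IntegrableOn g (Ioi 1)) (k : ℕ) :
    ∑ j ∈ Finset.range (k + 1), 2 ^ j * g (2 ^ j) ≤ g 1 + 2 * ∫ x in Ioi 1, g x := by
  have hpow : ∀ j : ℕ, (1 : ℝ) ≤ 2 ^ j := fun j => one_le_pow₀ one_le_two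
  have hle : ∀ j : ℕ, (2 : ℝ) ^ j ≤ 2 ^ (j + 1) := fun j =>
    pow_le_pow_right₀ one_le_two j.le_succ
  have hii : ∀ j : ℕ, IntervalIntegrable g volume (2 ^ j) (2 ^ (j + 1)) := fun j => by
    refine (hg.mono ?_).intervalIntegrable
    rw [uIcc_of_le (hle j)]
    exact Icc_subset_Ici_self.trans (Ici_subset_Ici.2 (hpow j))
  have hblock : ∀ j : ℕ,
      2 ^ (j + 1) * g (2 ^ (j + 1)) ≤ 2 * ∫ x in (2 : ℝ) ^ j..2 ^ (j + 1), g x := by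
    intro j
    have := intervalIntegral.integral_mono_on (hle j) intervalIntegrable_const (hii j)
      fun x hx => hg ((hpow j).trans hx.1) ((hpow j).trans (hle j)) hx.2
    rw [intervalIntegral.integral_const, smul_eq_mul,
      show (2 : ℝ) ^ (j + 1) - 2 ^ j = 2 ^ j by ring] at this
    linarith [show (2 : ℝ) ^ (j + 1) * g (2 ^ (j + 1)) = 2 * (2 ^ j * g (2 ^ (j + 1))) by ring]
  have hsum : ∑ j ∈ Finset.range k, ∫ x in (2 : ℝ) ^ j..2 ^ (j + 1), g x =
      ∫ x in (1 : ℝ)..2 ^ k, g x := by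
    rw [intervalIntegral.sum_integral_adjacent_intervals (a := fun j => (2 : ℝ) ^ j)
      fun j _ => hii j, pow_zero]
  have htail : ∫ x in (1 : ℝ)..2 ^ k, g x ≤ ∫ x in Ioi 1, g x := by
    rw [intervalIntegral.integral_of_le (hpow k)]
    exact setIntegral_mono_set hint ((ae_restrict_iff' measurableSet_Ioi).2 (ae_of_all _ hg0))
      (Ioc_subset_Ioi_self.eventuallyLE)
  calc ∑ j ∈ Finset.range (k + 1), 2 ^ j * g (2 ^ j)
      = ∑ j ∈ Finset.range k, 2 ^ (j + 1) * g (2 ^ (j + 1)) + g 1 := by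
        simp [Finset.sum_range_succ']
    _ ≤ 2 * (∫ x in (1 : ℝ)..2 ^ k, g x) + g 1 := by
        rw [← hsum, Finset.mul_sum]
        linarith [Finset.sum_le_sum fun j (_ : j ∈ Finset.range k) => hblock j]
    _ ≤ g 1 + 2 * ∫ x in Ioi 1, g x := by linarith

theorem exists_forall_le_lt_one_of_integrableOn_inv {φ : ℝ → ℝ}
    (hφpos : ∀ x, 0 < x → 0 < φ x) (hφ : MonotoneOn φ (Ioi 0))
    (hint : IntegrableOn (fun x => (φ x)⁻¹) (Ioi 1)) :
    ∃ t0 : ℝ, ∀ u D : ℝ → ℝ, AntitoneOn u (Ici 0) → ContinuousOn u (Ici 0) →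
      (∀ s, 0 < s → 0 < u s → HasDerivWithinAt u (D s) (Iic s) s) →
      (∀ s, 0 < s → 0 < u s → D s ≤ -φ (u s)) →
      ∀ t, t0 ≤ t → u t < 1 := by
  have hinv_nonneg : ∀ x ∈ Ioi (1 : ℝ), 0 ≤ (φ x)⁻¹ := fun x hx =>
    (inv_pos.2 (hφpos x (one_pos.trans hx))).le
  have hinv_anti : AntitoneOn (fun x => (φ x)⁻¹) (Ici 1) := fun x hx y hy hxy =>
    inv_anti₀ (hφpos x (one_pos.trans_le hx))
      (hφ (mem_Ioi.2 (one_pos.trans_le hx)) (mem_Ioi.2 (one_pos.trans_le hy)) hxy)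
  refine ⟨(φ 1)⁻¹ + 2 * (∫ x in Ioi 1, (φ x)⁻¹) + 1, ?_⟩
  intro u D hu hcont hderiv hD t ht
  by_contra! hut
  have hφ1 := inv_pos.2 (hφpos 1 one_pos)
  have hI : 0 ≤ ∫ x in Ioi 1, (φ x)⁻¹ := setIntegral_nonneg measurableSet_Ioi hinv_nonneg
  obtain ⟨k, hk⟩ := pow_unbounded_of_one_lt (u 0) one_lt_two
  have htime := sub_le_sum_two_pow_div_of_le_two_pow hφpos hφ hu hcont hderiv hD hut (k + 1) 0
    le_rfl (by linarith) (hk.le.trans (pow_le_pow_right₀ one_le_two k.le_succ))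
  have hsum := hinv_anti.sum_two_pow_mul_le_integral_Ioi hinv_nonneg hint k
  simp only [← div_eq_mul_inv] at hsum
  linarith

/-- Key estimate for the ODE proof of Thomassen's transience criterion:
if `F` is positive, nondecreasing with `∫_1^∞ F(s)⁻² ds < ∞` and `C > 0`,
there is `t₀` (depending only on `C` and `F`) such that every nonincreasing
`u : [0,∞) → [0,∞)` whose left derivative satisfies
`u'(s) ≤ -(C F(u(s)))²` whenever `u(s) > 0` obeys `u(t) < 1` for all `t ≥ t₀`. -/
theorem statement12 (C : ℝ) (hC : 0 < C)
    (F : ℝ → ℝ) (hFpos : ∀ x, 0 < x → 0 < F x)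
    (hFmono : MonotoneOn F (Set.Ioi (0 : ℝ)))
    (hFint : IntegrableOn (fun s => 1 / F s ^ 2) (Set.Ioi (1 : ℝ))) :
    ∃ t0 : ℝ, ∀ u D : ℝ → ℝ,
      (∀ s, 0 ≤ u s) →
      AntitoneOn u (Set.Ici (0 : ℝ)) →
      ContinuousOn u (Set.Ici (0 : ℝ)) →
      (∀ s, 0 < s → 0 < u s → HasDerivWithinAt u (D s) (Set.Iic s) s) →
      (∀ s, 0 < s → 0 < u s → D s ≤ -(C * F (u s)) ^ 2) →
      ∀ t, t0 ≤ t → u t < 1 := by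
  have hspeed_mono : MonotoneOn (fun x => (C * F x) ^ 2) (Ioi 0) := fun x hx y hy hxy =>
    pow_le_pow_left₀ (mul_pos hC (hFpos x hx)).le
      (mul_le_mul_of_nonneg_left (hFmono hx hy hxy) hC.le) 2
  have hspeed_int : IntegrableOn (fun x => ((C * F x) ^ 2)⁻¹) (Ioi 1) :=
    IntegrableOn.congr_fun (hFint.const_mul (C ^ 2)⁻¹)
      (fun x _ => by rw [mul_pow, mul_inv, one_div]) measurableSet_Ioi
  obtain ⟨t0, ht0⟩ := exists_forall_le_lt_one_of_integrableOn_inv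
    (fun x hx => pow_pos (mul_pos hC (hFpos x hx)) 2) hspeed_mono hspeed_int
  exact ⟨t0, fun u D _ => ht0 u D⟩
end
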